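/- arXiv:math/0210041 — 5 statements merged into one kernel-verified Lean document; each statement's English description precedes it below -/
import Mathlib

section
/- For every 0 ≤ ε ≤ 1, Δ(ε) ≥ ε²/2. (Equivalently: every measurable subset of [0,1) of Lebesgue measure ε contains, for every δ < ε²/2, a symmetric measurable subset of measure at least δ.) -/
open MeasureTheory

/-- A set `C ⊆ ℝ` is symmetric if it is invariant under some reflection `x ↦ 2c − x`. -/
def IsSymmetricSet (C : Set ℝ) : Prop :=
  ∃ c : ℝ, ∀ x : ℝ, x ∈ C ↔ 2 * c - x ∈ C

/-- `symD A` is the supremum of measures of symmetric measurable subsets of `A`. -/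
noncomputable def symD (A : Set ℝ) : ℝ :=
  sSup {m : ℝ | ∃ C : Set ℝ, C ⊆ A ∧ MeasurableSet C ∧ IsSymmetricSet C ∧
    m = (volume C).toReal}

/-- `Delta ε` is the infimum of `symD A` over measurable `A ⊆ [0,1)` with `λ(A) = ε`. -/
noncomputable def Delta (ε : ℝ) : ℝ :=
  sInf {d : ℝ | ∃ A : Set ℝ, A ⊆ Set.Ico (0:ℝ) 1 ∧ MeasurableSet A ∧
    volume A = ENNReal.ofReal ε ∧ d = symD A}

open scoped ENNReal

namespace DeltaAux

def symC (A : Set ℝ) (c : ℝ) : Set ℝ := A ∩ (fun x => 2 * c - x) ⁻¹' A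

lemma symC_subset (A : Set ℝ) (c : ℝ) : symC A c ⊆ A := Set.inter_subset_left

lemma symC_measurable {A : Set ℝ} (hA : MeasurableSet A) (c : ℝ) :
    MeasurableSet (symC A c) :=
  hA.inter (hA.preimage (by fun_prop))

lemma symC_symmetric (A : Set ℝ) (c : ℝ) : IsSymmetricSet (symC A c) := by
  refine ⟨c, fun x => ?_⟩
  simp only [symC, Set.mem_inter_iff, Set.mem_preimage]
  constructor
  · rintro ⟨h1, h2⟩
    refine ⟨h2, ?_⟩
    have h : 2 * c - (2 * c - x) = x := by ring
    rw [h]; exact h1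
  · rintro ⟨h1, h2⟩
    have h : 2 * c - (2 * c - x) = x := by ring
    rw [h] at h2
    exact ⟨h2, h1⟩

lemma bddAbove_symSet {A : Set ℝ} (hA : A ⊆ Set.Ico (0:ℝ) 1) :
    BddAbove {m : ℝ | ∃ C : Set ℝ, C ⊆ A ∧ MeasurableSet C ∧ IsSymmetricSet C ∧
      m = (volume C).toReal} := by
  refine ⟨1, ?_⟩
  rintro m ⟨C, hCA, _, _, rfl⟩
  have h1 : volume C ≤ volume (Set.Ico (0:ℝ) 1) := measure_mono (hCA.trans hA)
  have h2 : volume (Set.Ico (0:ℝ) 1) = 1 := by simp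
  rw [h2] at h1
  calc (volume C).toReal ≤ (1 : ℝ≥0∞).toReal := ENNReal.toReal_mono (by simp) h1
    _ = 1 := by simp

lemma symC_mem {A : Set ℝ} (hA : MeasurableSet A) (c : ℝ) :
    (volume (symC A c)).toReal ∈ {m : ℝ | ∃ C : Set ℝ, C ⊆ A ∧ MeasurableSet C ∧
      IsSymmetricSet C ∧ m = (volume C).toReal} :=
  ⟨symC A c, symC_subset A c, symC_measurable hA c, symC_symmetric A c, rfl⟩

lemma volume_symC_eq (A : Set ℝ) (hA : MeasurableSet A) (c : ℝ) :
    volume (symC A c) = ∫⁻ x, A.indicator 1 x * A.indicator 1 (2 * c - x) := by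
  have hm : MeasurableSet ((fun x : ℝ => 2 * c - x) ⁻¹' A) := hA.preimage (by fun_prop)
  rw [symC, ← lintegral_indicator_one (hA.inter hm)]
  congr 1
  funext x
  by_cases hx : x ∈ A <;> by_cases hx2 : (2 * c - x) ∈ A <;>
    simp [Set.indicator_apply, hx, hx2]

lemma inner_integral (A : Set ℝ) (hA : MeasurableSet A) (x : ℝ) :
    ∫⁻ c, A.indicator 1 (2 * c - x) = ENNReal.ofReal 2⁻¹ * volume A := by
  have hkey : (fun c : ℝ => A.indicator (1 : ℝ → ℝ≥0∞) (2 * c - x)) =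
      ((fun c : ℝ => 2 * c) ⁻¹' ((fun y : ℝ => y - x) ⁻¹' A)).indicator 1 := by
    funext c
    by_cases h : (2 * c - x) ∈ A <;> simp [Set.indicator_apply, h]
  rw [hkey]
  have hm : MeasurableSet ((fun c : ℝ => 2 * c) ⁻¹' ((fun y : ℝ => y - x) ⁻¹' A)) := by
    exact (hA.preimage (by fun_prop)).preimage (by fun_prop)
  rw [lintegral_indicator_one hm]
  have h2 : volume ((fun c : ℝ => 2 * c) ⁻¹' ((fun y : ℝ => y - x) ⁻¹' A)) =
      ENNReal.ofReal |(2:ℝ)⁻¹| * volume ((fun y : ℝ => y - x) ⁻¹' A) := by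
    exact Real.volume_preimage_mul_left (by norm_num) _
  rw [h2]
  have h3 : volume ((fun y : ℝ => y - x) ⁻¹' A) = volume A := by
    have : (fun y : ℝ => y - x) ⁻¹' A = (fun y : ℝ => y + (-x)) ⁻¹' A := by
      simp [sub_eq_add_neg]
    rw [this, measure_preimage_add_right]
  rw [h3, abs_of_pos (by norm_num : (0:ℝ) < 2⁻¹)]

lemma integral_eq (A : Set ℝ) (hA : MeasurableSet A) :
    ∫⁻ c, volume (symC A c) = ENNReal.ofReal 2⁻¹ * (volume A * volume A) := by
  have hmeas : Measurable (Function.uncurry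
      (fun c x : ℝ => A.indicator (1 : ℝ → ℝ≥0∞) x * A.indicator 1 (2 * c - x))) := by
    apply Measurable.mul
    · exact (measurable_const.indicator hA).comp measurable_snd
    · exact (measurable_const.indicator hA).comp
        (by fun_prop : Measurable fun p : ℝ × ℝ => 2 * p.1 - p.2)
  calc ∫⁻ c, volume (symC A c)
      = ∫⁻ c, ∫⁻ x, A.indicator 1 x * A.indicator 1 (2 * c - x) := by
        simp_rw [volume_symC_eq A hA]
    _ = ∫⁻ x, ∫⁻ c, A.indicator 1 x * A.indicator 1 (2 * c - x) := by
        exact lintegral_lintegral_swap hmeas.aemeasurable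
    _ = ∫⁻ x, A.indicator 1 x * ∫⁻ c, A.indicator 1 (2 * c - x) := by
        congr 1
        funext x
        exact lintegral_const_mul _ ((measurable_const.indicator hA).comp (by fun_prop))
    _ = ∫⁻ x, A.indicator 1 x * (ENNReal.ofReal 2⁻¹ * volume A) := by
        simp_rw [inner_integral A hA]
    _ = (∫⁻ x, A.indicator 1 x) * (ENNReal.ofReal 2⁻¹ * volume A) := by
        exact lintegral_mul_const _ (measurable_const.indicator hA)
    _ = ENNReal.ofReal 2⁻¹ * (volume A * volume A) := by
        rw [lintegral_indicator_one hA]; ring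

lemma symC_empty {A : Set ℝ} (hA : A ⊆ Set.Ico (0:ℝ) 1) {c : ℝ}
    (hc : c ∉ Set.Ico (0:ℝ) 1) : symC A c = ∅ := by
  ext x
  simp only [symC, Set.mem_inter_iff, Set.mem_preimage, Set.mem_empty_iff_false, iff_false,
    not_and]
  intro hx h2x
  have h1 := hA hx
  have h2 := hA h2x
  simp only [Set.mem_Ico] at h1 h2 hc
  push_neg at hc
  rcases le_or_gt 0 c with h0c | h0c
  · have := hc h0c
    linarith [h1.1, h2.2]
  · linarith [h1.2, h2.1]

lemma symD_ge {A : Set ℝ} (hAsub : A ⊆ Set.Ico (0:ℝ) 1) (hA : MeasurableSet A)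
    {ε : ℝ} (hε : 0 ≤ ε) (hvol : volume A = ENNReal.ofReal ε) :
    ε ^ 2 / 2 ≤ symD A := by
  set M := symD A with hM
  have hub : ∀ c, (volume (symC A c)).toReal ≤ M :=
    fun c => le_csSup (bddAbove_symSet hAsub) (symC_mem hA c)
  have hM0 : 0 ≤ M := le_trans ENNReal.toReal_nonneg (hub 0)
  have hfin : ∀ c, volume (symC A c) ≠ ⊤ := by
    intro c
    have : volume (symC A c) ≤ volume A := measure_mono (symC_subset A c)
    rw [hvol] at this
    exact (this.trans_lt ENNReal.ofReal_lt_top).ne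
  have hbound : ∀ c, volume (symC A c) ≤ ENNReal.ofReal M := by
    intro c
    exact (ENNReal.le_ofReal_iff_toReal_le (hfin c) hM0).2 (hub c)
  have hind : (fun c => volume (symC A c)) =
      (Set.Ico (0:ℝ) 1).indicator (fun c => volume (symC A c)) := by
    funext c
    by_cases hc : c ∈ Set.Ico (0:ℝ) 1
    · simp [Set.indicator_apply, hc]
    · simp [Set.indicator_apply, hc, symC_empty hAsub hc]
  have hInt : ∫⁻ c, volume (symC A c) ≤ ENNReal.ofReal M := by
    calc ∫⁻ c, volume (symC A c)
        = ∫⁻ c in Set.Ico (0:ℝ) 1, volume (symC A c) := by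
          conv_lhs => rw [hind]
          rw [lintegral_indicator measurableSet_Ico]
      _ ≤ ∫⁻ _ in Set.Ico (0:ℝ) 1, ENNReal.ofReal M := lintegral_mono (fun c => hbound c)
      _ = ENNReal.ofReal M * volume (Set.Ico (0:ℝ) 1) := setLIntegral_const _ _
      _ = ENNReal.ofReal M := by simp
  rw [integral_eq A hA, hvol] at hInt
  have hInt' : ENNReal.ofReal (ε ^ 2 / 2) ≤ ENNReal.ofReal M := by
    calc ENNReal.ofReal (ε ^ 2 / 2) = ENNReal.ofReal 2⁻¹ * (ENNReal.ofReal ε * ENNReal.ofReal ε) := by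
          rw [← ENNReal.ofReal_mul hε, ← ENNReal.ofReal_mul (by norm_num)]
          congr 1
          ring
      _ ≤ ENNReal.ofReal M := hInt
  exact (ENNReal.ofReal_le_ofReal_iff hM0).1 hInt'

end DeltaAux

theorem delta_ge_half_eps_sq (ε : ℝ) (h0 : 0 ≤ ε) (h1 : ε ≤ 1) :
    Delta ε ≥ ε ^ 2 / 2 := by
  rw [Delta, ge_iff_le]
  apply le_csInf
  · refine ⟨symD (Set.Ico 0 ε), Set.Ico 0 ε, Set.Ico_subset_Ico le_rfl h1,
      measurableSet_Ico, ?_, rfl⟩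
    rw [Real.volume_Ico, sub_zero]
  · rintro d ⟨A, hAsub, hA, hvol, rfl⟩
    exact DeltaAux.symD_ge hAsub hA h0 hvol
end

section
/- If S and T are measurable subsets of ℝ of finite Lebesgue measure, then |D(S) − D(T)| ≤ 2·λ(S △ T), where S △ T = (S \ T) ∪ (T \ S) denotes the symmetric difference. -/
/-!
Let `C ⊆ S` be measurable and symmetric about `c`, and let `σ x = 2c - x`. Removing from `C` a
measurable hull `H` of `S △ T` together with its mirror image `σ⁻¹ H` leaves a set that is still
symmetric about `c`, lies in `T`, and has lost at most `λ(H) + λ(σ⁻¹ H) = 2 λ(S △ T)`. Hence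
`D(S) ≤ D(T) + 2 λ(S △ T)`, and the theorem follows by exchanging `S` and `T`.
-/

open MeasureTheory

lemma le_symD {A C : Set ℝ} (hA : volume A < ⊤) (hCA : C ⊆ A) (hC : MeasurableSet C)
    (hCsym : IsSymmetricSet C) : (volume C).toReal ≤ symD A := by
  refine le_csSup ⟨(volume A).toReal, ?_⟩ ⟨C, hCA, hC, hCsym, rfl⟩
  rintro m ⟨C', hC'A, -, -, rfl⟩
  exact ENNReal.toReal_mono hA.ne (measure_mono hC'A)

lemma symD_le {A : Set ℝ} {b : ℝ}
    (h : ∀ C ⊆ A, MeasurableSet C → IsSymmetricSet C → (volume C).toReal ≤ b) :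
    symD A ≤ b := by
  refine csSup_le ⟨0, ∅, Set.empty_subset A, .empty, ⟨0, by simp⟩, by simp⟩ ?_
  rintro m ⟨C, hCA, hC, hCsym, rfl⟩
  exact h C hCA hC hCsym

lemma IsSymmetricSet.exists_subset_diff {C : Set ℝ} (hCsym : IsSymmetricSet C)
    (hC : MeasurableSet C) (E : Set ℝ) :
    ∃ D ⊆ C \ E, MeasurableSet D ∧ IsSymmetricSet D ∧ volume C ≤ volume D + 2 * volume E := by
  obtain ⟨c, hc⟩ := hCsym
  have hσ := Measure.measurePreserving_sub_left volume (2 * c)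
  set H := toMeasurable volume E
  have hH : MeasurableSet H := measurableSet_toMeasurable _ _
  set M := H ∪ (fun x => 2 * c - x) ⁻¹' H
  refine ⟨C \ M,
    Set.sdiff_subset_sdiff_right ((subset_toMeasurable _ _).trans Set.subset_union_left),
    hC.diff (hH.union (hσ.measurable hH)), ⟨c, fun x => ?_⟩, ?_⟩
  · simp [M, hc x, or_comm]
  · calc volume C ≤ volume (C \ M) + volume M :=
          (measure_mono (Set.subset_sdiff_union C M)).trans (measure_union_le _ _)
      _ ≤ volume (C \ M) + (volume H + volume H) := by
          gcongr
          exact (measure_union_le _ _).trans_eq (by rw [hσ.measure_preimage hH.nullMeasurableSet])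
      _ = volume (C \ M) + 2 * volume E := by rw [measure_toMeasurable, two_mul]

lemma symD_le_symD_add {S T : Set ℝ} (hS : volume S < ⊤) (hT : volume T < ⊤) :
    symD S ≤ symD T + 2 * (volume (symmDiff S T)).toReal := by
  have hST : volume (symmDiff S T) ≠ ⊤ :=
    ((measure_mono symmDiff_le_sup).trans_lt (measure_union_lt_top hS hT)).ne
  refine symD_le fun C hCS hC hCsym => ?_
  obtain ⟨D, hD, hDm, hDsym, hCD⟩ := hCsym.exists_subset_diff hC (symmDiff S T)
  have hDT : D ⊆ T := fun x hx => by
    by_contra hxT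
    exact (hD hx).2 (Set.mem_symmDiff.2 (Or.inl ⟨hCS (hD hx).1, hxT⟩))
  have hDfin : volume D ≠ ⊤ := ((measure_mono hDT).trans_lt hT).ne
  calc (volume C).toReal ≤ (volume D).toReal + 2 * (volume (symmDiff S T)).toReal := by
        simpa [ENNReal.toReal_add hDfin (ENNReal.mul_ne_top ENNReal.ofNat_ne_top hST)] using
          ENNReal.toReal_mono (by finiteness) hCD
    _ ≤ symD T + 2 * (volume (symmDiff S T)).toReal := by
        gcongr
        exact le_symD hT hDT hDm hDsym

theorem abs_symD_sub_symD_le_general (S T : Set ℝ)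
    (hSfin : volume S < ⊤) (hTfin : volume T < ⊤) :
    |symD S - symD T| ≤ 2 * (volume (symmDiff S T)).toReal := by
  have hST := symD_le_symD_add hSfin hTfin
  have hTS := symD_le_symD_add hTfin hSfin
  rw [symmDiff_comm] at hTS
  rw [abs_sub_le_iff]
  constructor <;> linarith

theorem abs_symD_sub_symD_le (S T : Set ℝ) (hS : MeasurableSet S) (hT : MeasurableSet T)
    (hSfin : volume S < ⊤) (hTfin : volume T < ⊤) :
    |symD S - symD T| ≤ 2 * (volume (symmDiff S T)).toReal :=
  abs_symD_sub_symD_le_general S T hSfin hTfin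
end

section
/- Let K : 𝕋 → ℝ be a continuous function satisfying K(x) ≥ 1 for all x in the image of [−1/4,1/4] in 𝕋, and let f be a pdf supported on [−1/4,1/4]. Then ‖f∗f‖_∞ ≥ ‖f∗f‖₂² ≥ (∑_{j∈ℤ} |K̂(j)|^{4/3})^{−3}. -/
open MeasureTheory

/-- The normalized Haar (probability) measure on the unit circle `ℝ/ℤ`. -/
noncomputable def haarT : Measure UnitAddCircle := AddCircle.haarAddCircle

/-- The image of `[−1/4, 1/4]` in `𝕋 = ℝ/ℤ`. -/
def QuarterArc : Set UnitAddCircle :=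
  (fun x : ℝ => (x : UnitAddCircle)) '' Set.Icc (-(1/4) : ℝ) (1/4)

/-- `f` is a pdf supported on `[−1/4,1/4]`: a nonnegative function in `L²(𝕋)` with integral 1
which vanishes a.e. outside the image of `[−1/4,1/4]` in `𝕋`. -/
structure IsPdfQuarter (f : UnitAddCircle → ℝ) : Prop where
  memL2 : MemLp f 2 haarT
  nonneg : ∀ x, 0 ≤ f x
  integral_one : ∫ x, f x ∂haarT = 1
  support : ∀ᵐ x ∂haarT, x ∉ QuarterArc → f x = 0

/-- Convolution on `𝕋` with respect to the Haar probability measure. -/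
noncomputable def convT (f g : UnitAddCircle → ℝ) (c : UnitAddCircle) : ℝ :=
  ∫ x, f x * g (c - x) ∂haarT

/-!
On the arc where `f` lives `K ≥ 1`, so `1 ≤ ∫ f K`, and by Parseval `∫ f K = ∑ₙ conj (f̂ n) K̂ n`.
Hölder's inequality with exponents `4` and `4/3` bounds this sum by
`(∑ |f̂ n|⁴)^{1/4} (∑ |K̂ n|^{4/3})^{3/4}`, and `∑ |f̂ n|⁴ = ∑ |(f ∗ f)^ n|² = ‖f ∗ f‖₂²` by the
convolution theorem and Parseval again. The second inequality is `‖g‖₂² ≤ ‖g‖_∞ ‖g‖₁` for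
`g = f ∗ f ≥ 0`, whose integral is `(∫ f)² = 1`.
-/

open Complex
open ContinuousLinearMap (lsmul)
open scoped ComplexConjugate ENNReal Convolution

namespace AddCircle

variable {T : ℝ}

theorem fourier_apply_add (n : ℤ) (x y : AddCircle T) :
    fourier n (x + y) = fourier n x * fourier n y := by
  simp only [fourier_apply, smul_add, toCircle_add, Circle.coe_mul]

variable [Fact (0 < T)]

theorem fourier_smul_convolution (f g : AddCircle T → ℂ) (n : ℤ) (c : AddCircle T) :
    fourier n c • (f ⋆[lsmul ℂ ℂ, haarAddCircle] g) c =
      ((fun t => fourier n t • f t) ⋆[lsmul ℂ ℂ, haarAddCircle] fun t => fourier n t • g t) c := by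
  simp only [convolution_lsmul, ← integral_smul]
  congr 1
  ext x
  rw [← add_sub_cancel x c, fourier_apply_add, add_sub_cancel_left]
  simp only [smul_eq_mul]
  ring

theorem fourierCoeff_convolution {f g : AddCircle T → ℂ} (hf : Integrable f haarAddCircle)
    (hg : Integrable g haarAddCircle) (n : ℤ) :
    fourierCoeff (f ⋆[lsmul ℂ ℂ, haarAddCircle] g) n = fourierCoeff f n * fourierCoeff g n := by
  simp only [fourierCoeff, fourier_smul_convolution]
  exact integral_convolution _ (hf.fourier_smul _) (hg.fourier_smul _)

theorem hasSum_conj_fourierCoeff_mul {f g : AddCircle T → ℂ}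
    (hf : MemLp f 2 haarAddCircle) (hg : MemLp g 2 haarAddCircle) :
    HasSum (fun n => conj (fourierCoeff f n) * fourierCoeff g n)
      (∫ t, conj (f t) * g t ∂haarAddCircle) := by
  have hcoeff : (fun n => conj (fourierCoeff f n) * fourierCoeff g n) =
      fun n => inner ℂ (hf.toLp f) (fourierBasis n) * inner ℂ (fourierBasis n) (hg.toLp g) := by
    ext n
    rw [← inner_conj_symm, ← fourierBasis.repr_apply_apply, ← fourierBasis.repr_apply_apply,
      fourierBasis_repr, fourierBasis_repr, fourierCoeff_congr_ae hf.coeFn_toLp,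
      fourierCoeff_congr_ae hg.coeFn_toLp]
  have hinner : ∫ t, conj (f t) * g t ∂haarAddCircle = inner ℂ (hf.toLp f) (hg.toLp g) := by
    rw [L2.inner_def]
    refine integral_congr_ae ?_
    filter_upwards [hf.coeFn_toLp, hg.coeFn_toLp] with t hft hgt
    rw [hft, hgt, RCLike.inner_apply, mul_comm]
  rw [hcoeff, hinner]
  exact fourierBasis.hasSum_inner_mul_inner _ _

theorem hasSum_sq_norm_fourierCoeff {f : AddCircle T → ℂ} (hf : MemLp f 2 haarAddCircle) :
    HasSum (fun n => ‖fourierCoeff f n‖ ^ 2) (∫ t, ‖f t‖ ^ 2 ∂haarAddCircle) := by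
  have h := hasSum_conj_fourierCoeff_mul hf hf
  simp only [conj_mul'] at h
  rw [← Complex.hasSum_ofReal, ← integral_complex_ofReal]
  push_cast
  exact h

theorem summable_norm_fourierCoeff_mul {f g : AddCircle T → ℂ} (hf : MemLp f 2 haarAddCircle)
    (hg : MemLp g 2 haarAddCircle) : Summable fun n => ‖fourierCoeff f n‖ * ‖fourierCoeff g n‖ := by
  refine Summable.of_nonneg_of_le (fun n => by positivity) (fun n => ?_)
    (((hasSum_sq_norm_fourierCoeff hf).summable.add
      (hasSum_sq_norm_fourierCoeff hg).summable).div_const 2)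
  nlinarith [sq_nonneg (‖fourierCoeff f n‖ - ‖fourierCoeff g n‖)]

theorem norm_integral_conj_mul_le_tsum {f g : AddCircle T → ℂ} (hf : MemLp f 2 haarAddCircle)
    (hg : MemLp g 2 haarAddCircle) :
    ‖∫ t, conj (f t) * g t ∂haarAddCircle‖ ≤ ∑' n, ‖fourierCoeff f n‖ * ‖fourierCoeff g n‖ := by
  rw [← (hasSum_conj_fourierCoeff_mul hf hg).tsum_eq]
  refine (norm_tsum_le_tsum_norm ?_).trans_eq ?_
  all_goals simp only [norm_mul, RCLike.norm_conj]
  exact summable_norm_fourierCoeff_mul hf hg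

end AddCircle

section

variable {α E : Type*} [MeasurableSpace α] {μ : Measure α} [NormedAddCommGroup E]

theorem eLpNorm_two_sq_le_eLpNorm_top_mul_eLpNorm_one {g : α → E}
    (hg : AEStronglyMeasurable g μ) :
    eLpNorm g 2 μ ^ 2 ≤ eLpNorm g ∞ μ * eLpNorm g 1 μ := by
  have hsq : eLpNorm g 2 μ ^ 2 = ∫⁻ x, ‖g x‖ₑ ^ 2 ∂μ := by
    simpa using eLpNorm_nnreal_pow_eq_lintegral (f := g) (μ := μ) (p := 2) two_ne_zero
  rw [hsq, eLpNorm_exponent_top, eLpNorm_one_eq_lintegral_enorm, ← lintegral_const_mul'' _ hg.enorm]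
  refine lintegral_mono_ae ?_
  filter_upwards [ae_le_eLpNormEssSup (f := g) (μ := μ)] with x hx
  rw [sq]
  exact mul_le_mul_left hx _

theorem MeasureTheory.MemLp.ofReal_integral_norm_sq {g : α → E} (hg : MemLp g 2 μ) :
    ENNReal.ofReal (∫ x, ‖g x‖ ^ 2 ∂μ) = eLpNorm g 2 μ ^ 2 := by
  rw [hg.eLpNorm_eq_integral_rpow_norm two_ne_zero ENNReal.ofNat_ne_top,
    ← ENNReal.ofReal_pow (by positivity), ENNReal.toReal_ofNat, ← Real.rpow_natCast,
    ← Real.rpow_mul (by positivity)]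
  norm_num

theorem integral_le_integral_mul_of_one_le_on {f K : α → ℝ} {s : Set α} (hf0 : ∀ x, 0 ≤ f x)
    (hfs : ∀ᵐ x ∂μ, x ∉ s → f x = 0) (hKs : ∀ x ∈ s, 1 ≤ K x) (hf : Integrable f μ)
    (hfK : Integrable (fun x => f x * K x) μ) :
    ∫ x, f x ∂μ ≤ ∫ x, f x * K x ∂μ := by
  refine integral_mono_ae hf hfK ?_
  filter_upwards [hfs] with x hx
  by_cases hxs : x ∈ s
  · exact le_mul_of_one_le_right (hf0 x) (hKs x hxs)
  · simp [hx hxs]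

end

theorem rpow_neg_le_tsum_of_one_le_tsum_mul {ι : Type*} {p q : ℝ} (hpq : p.HolderConjugate q)
    {a b : ι → ℝ} (ha : ∀ i, 0 ≤ a i) (hb : ∀ i, 0 ≤ b i) (hap : Summable fun i => a i ^ p)
    (hab : 1 ≤ ∑' i, a i * b i) :
    (∑' i, b i ^ q) ^ (-(p / q)) ≤ ∑' i, a i ^ p := by
  set A := ∑' i, a i ^ p
  set B := ∑' i, b i ^ q
  have hA : 0 ≤ A := tsum_nonneg fun i => Real.rpow_nonneg (ha i) p
  have hB : 0 ≤ B := tsum_nonneg fun i => Real.rpow_nonneg (hb i) q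
  by_cases hbq : Summable fun i => b i ^ q
  swap
  · rw [show B = 0 from tsum_eq_zero_of_not_summable hbq,
      Real.zero_rpow (neg_ne_zero.2 (div_pos hpq.pos hpq.symm.pos).ne')]
    exact hA
  have holder : 1 ≤ A ^ (1 / p) * B ^ (1 / q) :=
    hab.trans (Real.inner_le_Lp_mul_Lq_tsum_of_nonneg hpq ha hb hap hbq)
  have key : 1 ≤ A * B ^ (p / q) :=
    calc (1 : ℝ) ≤ (A ^ (1 / p) * B ^ (1 / q)) ^ p := Real.one_le_rpow holder hpq.nonneg
      _ = A * B ^ (p / q) := by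
        rw [Real.mul_rpow (Real.rpow_nonneg hA _) (Real.rpow_nonneg hB _), ← Real.rpow_mul hA,
          ← Real.rpow_mul hB, one_div_mul_cancel hpq.ne_zero, Real.rpow_one, one_div_mul_eq_div]
  have hBpos : 0 < B ^ (p / q) := by
    refine (Real.rpow_nonneg hB _).lt_of_ne fun h => ?_
    rw [← h, mul_zero] at key
    norm_num at key
  rw [Real.rpow_neg hB]
  exact (inv_le_iff_one_le_mul₀ hBpos).2 key

instance : IsProbabilityMeasure haarT :=
  inferInstanceAs (IsProbabilityMeasure AddCircle.haarAddCircle)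

instance : haarT.IsAddRightInvariant :=
  inferInstanceAs (AddCircle.haarAddCircle.IsAddRightInvariant)

theorem convT_eq_convolution (f g : UnitAddCircle → ℝ) :
    convT f g = f ⋆[lsmul ℝ ℝ, haarT] g := by
  ext c
  simp [convT, convolution_lsmul]

theorem ofReal_convT (f g : UnitAddCircle → ℝ) :
    (fun c => (convT f g c : ℂ)) =
      (fun x => (f x : ℂ)) ⋆[lsmul ℂ ℂ, haarT] fun x => (g x : ℂ) := by
  ext c
  simp only [convT, convolution_lsmul, smul_eq_mul, ← ofReal_mul, integral_complex_ofReal]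

theorem fourierCoeff_convT {f g : UnitAddCircle → ℝ} (hf : Integrable f haarT)
    (hg : Integrable g haarT) (n : ℤ) :
    fourierCoeff (fun c => (convT f g c : ℂ)) n =
      fourierCoeff (fun x => (f x : ℂ)) n * fourierCoeff (fun x => (g x : ℂ)) n := by
  rw [ofReal_convT]
  exact AddCircle.fourierCoeff_convolution hf.ofReal hg.ofReal n

namespace IsPdfQuarter

variable {f : UnitAddCircle → ℝ} (hf : IsPdfQuarter f)
include hf

theorem integrable : Integrable f haarT := hf.memL2.integrable one_le_two

theorem integrable_convT : Integrable (convT f f) haarT := by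
  rw [convT_eq_convolution]
  exact hf.integrable.integrable_convolution _ hf.integrable

theorem eLpNorm_convT_one : eLpNorm (convT f f) 1 haarT = 1 := by
  have hnonneg : 0 ≤ᵐ[haarT] convT f f := .of_forall fun c =>
    integral_nonneg fun x => mul_nonneg (hf.nonneg x) (hf.nonneg _)
  have hint : ∫ c, convT f f c ∂haarT = 1 := by
    rw [convT_eq_convolution, integral_convolution _ hf.integrable hf.integrable,
      hf.integral_one]
    simp
  rw [eLpNorm_one_eq_lintegral_enorm, ← ofReal_integral_norm_eq_lintegral_enorm hf.integrable_convT,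
    integral_congr_ae (hnonneg.mono fun c hc => Real.norm_of_nonneg hc), hint, ENNReal.ofReal_one]

theorem eLpNorm_convT_two_sq_le_top :
    eLpNorm (convT f f) 2 haarT ^ 2 ≤ eLpNorm (convT f f) ∞ haarT := by
  simpa [hf.eLpNorm_convT_one] using
    eLpNorm_two_sq_le_eLpNorm_top_mul_eLpNorm_one hf.integrable_convT.aestronglyMeasurable

theorem one_le_tsum_norm_fourierCoeff_mul {K : UnitAddCircle → ℝ} (hK : Continuous K)
    (hK1 : ∀ x ∈ QuarterArc, 1 ≤ K x) :
    1 ≤ ∑' n, ‖fourierCoeff (fun x => (f x : ℂ)) n‖ * ‖fourierCoeff (fun x => (K x : ℂ)) n‖ := by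
  have hf2 : MemLp (fun x => (f x : ℂ)) 2 AddCircle.haarAddCircle := hf.memL2.ofReal
  have hK2 : MemLp K 2 haarT := hK.memLp_of_hasCompactSupport (.of_compactSpace K)
  have hfK : Integrable (fun x => f x * K x) haarT := hf.memL2.integrable_mul hK2
  have hmass : 1 ≤ ∫ x, f x * K x ∂haarT :=
    hf.integral_one.symm.le.trans (integral_le_integral_mul_of_one_le_on hf.nonneg hf.support hK1
      hf.integrable hfK)
  calc 1 ≤ ‖∫ t, conj (f t : ℂ) * (K t : ℂ) ∂AddCircle.haarAddCircle‖ := by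
        simp_rw [conj_ofReal, ← ofReal_mul, integral_complex_ofReal, norm_real, Real.norm_eq_abs]
        exact hmass.trans (le_abs_self _)
    _ ≤ _ := AddCircle.norm_integral_conj_mul_le_tsum hf2 hK2.ofReal

end IsPdfQuarter

theorem kernel_lower_bound (K : UnitAddCircle → ℝ) (hK : Continuous K)
    (hK1 : ∀ x ∈ QuarterArc, 1 ≤ K x)
    (f : UnitAddCircle → ℝ) (hf : IsPdfQuarter f) :
    ENNReal.ofReal ((∑' j : ℤ,
        ‖fourierCoeff (fun x => (K x : ℂ)) j‖ ^ ((4 : ℝ) / 3)) ^ (-(3 : ℝ)))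
        ≤ eLpNorm (convT f f) 2 haarT ^ 2 ∧
      eLpNorm (convT f f) 2 haarT ^ 2 ≤ eLpNorm (convT f f) ⊤ haarT := by
  refine ⟨?_, hf.eLpNorm_convT_two_sq_le_top⟩
  by_cases hg2 : eLpNorm (convT f f) 2 haarT = ∞
  · simp [hg2]
  have hg : MemLp (convT f f) 2 haarT :=
    ⟨hf.integrable_convT.aestronglyMeasurable, lt_top_iff_ne_top.2 hg2⟩
  have hparseval : HasSum (fun n => ‖fourierCoeff (fun x => (f x : ℂ)) n‖ ^ (4 : ℝ))
      (∫ c, ‖convT f f c‖ ^ 2 ∂haarT) := by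
    have hgC : MemLp (fun c => (convT f f c : ℂ)) 2 AddCircle.haarAddCircle := hg.ofReal
    have h := AddCircle.hasSum_sq_norm_fourierCoeff hgC
    simp only [fourierCoeff_convT hf.integrable hf.integrable, ← sq, norm_pow, ← pow_mul,
      norm_real] at h
    exact_mod_cast h
  have hpq : (4 : ℝ).HolderConjugate (4 / 3) := by constructor <;> norm_num
  have hholder := rpow_neg_le_tsum_of_one_le_tsum_mul hpq (fun _ => norm_nonneg _)
    (fun _ => norm_nonneg _) hparseval.summable (hf.one_le_tsum_norm_fourierCoeff_mul hK hK1)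
  rw [hparseval.tsum_eq, show -((4 : ℝ) / (4 / 3)) = -3 by norm_num] at hholder
  exact (ENNReal.ofReal_le_ofReal hholder).trans_eq hg.ofReal_integral_norm_sq
end

section
/- Let f be a pdf supported on [−1/4,1/4]. Then 2·(Re f̂(1))² − 1 ≤ Re f̂(2) ≤ 2·Re f̂(1) − 1. -/
open MeasureTheory

/-!
With `c x = cos 2πx = Re e(-x)`, `a = ∫ c f` and `b = ∫ c² f`, the double-angle formula gives
`Re f̂(1) = a` and `Re f̂(2) = 2b - 1`. Since `f` is a probability density, `a² ≤ b` (the variance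
of `c` under `f` is nonnegative); since `0 ≤ c ≤ 1` on `[-1/4, 1/4]`, `c² ≤ c` on the support of
`f`, so `b ≤ a`.
-/

open Real AddCircle

section Moments

variable {α : Type*} [MeasurableSpace α] {μ : Measure α} {f g : α → ℝ}

theorem sq_integral_mul_le_integral_sq_mul (hf₀ : 0 ≤ᵐ[μ] f) (hf : Integrable f μ)
    (hf₁ : ∫ x, f x ∂μ = 1) (hgf : Integrable (fun x => g x * f x) μ)
    (hg2f : Integrable (fun x => g x ^ 2 * f x) μ) :
    (∫ x, g x * f x ∂μ) ^ 2 ≤ ∫ x, g x ^ 2 * f x ∂μ := by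
  set m := ∫ x, g x * f x ∂μ
  have hvar : ∫ x, (g x - m) ^ 2 * f x ∂μ = ∫ x, g x ^ 2 * f x ∂μ - m ^ 2 := by
    have hexpand : (fun x => (g x - m) ^ 2 * f x)
        = fun x => g x ^ 2 * f x - 2 * m * (g x * f x) + m ^ 2 * f x := by
      ext x; ring
    rw [hexpand, integral_add (f := fun x => g x ^ 2 * f x - 2 * m * (g x * f x))
      (hg2f.sub (hgf.const_mul _)) (hf.const_mul _),
      integral_sub hg2f (hgf.const_mul _), integral_const_mul, integral_const_mul, hf₁]
    ring
  have hnonneg : 0 ≤ ∫ x, (g x - m) ^ 2 * f x ∂μ :=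
    integral_nonneg_of_ae (hf₀.mono fun x hx => mul_nonneg (sq_nonneg _) hx)
  linarith

theorem integral_sq_mul_le_integral_mul (hf₀ : 0 ≤ᵐ[μ] f)
    (hg : ∀ᵐ x ∂μ, f x ≠ 0 → g x ∈ Set.Icc 0 1) (hgf : Integrable (fun x => g x * f x) μ)
    (hg2f : Integrable (fun x => g x ^ 2 * f x) μ) :
    ∫ x, g x ^ 2 * f x ∂μ ≤ ∫ x, g x * f x ∂μ := by
  refine integral_mono_ae hg2f hgf ?_
  filter_upwards [hf₀, hg] with x hfx hgx
  rcases eq_or_ne (f x) 0 with hx | hx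
  · simp [hx]
  · obtain ⟨hg₀, hg₁⟩ := hgx hx
    exact mul_le_mul_of_nonneg_right (by nlinarith) hfx

end Moments

section Fourier

variable {T : ℝ}

theorem re_fourier_coe (n : ℤ) (x : ℝ) :
    (fourier n (x : AddCircle T)).re = cos (2 * π * n * x / T) := by
  rw [fourier_coe_apply, ← Complex.exp_ofReal_mul_I_re]
  push_cast
  ring_nf

theorem abs_re_fourier_le_one (n : ℤ) (x : AddCircle T) : |(fourier n x).re| ≤ 1 :=
  (Complex.abs_re_le_norm _).trans_eq (Circle.norm_coe _)

theorem re_fourier_two_mul (n : ℤ) (x : AddCircle T) :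
    (fourier (2 * n) x).re = 2 * (fourier n x).re ^ 2 - 1 := by
  have hnorm : Complex.normSq (fourier n x) = 1 := Circle.normSq_coe _
  rw [Complex.normSq_apply] at hnorm
  rw [two_mul, fourier_add, Complex.mul_re]
  linear_combination -hnorm

variable [Fact (0 < T)]

theorem MeasureTheory.Integrable.re_fourier_pow_mul {f : AddCircle T → ℝ}
    (hf : Integrable f haarAddCircle) (n : ℤ) (k : ℕ) :
    Integrable (fun x => (fourier n x).re ^ k * f x) haarAddCircle :=
  hf.bdd_mul (c := 1)
    ((Complex.continuous_re.comp (fourier n).continuous).pow k).aestronglyMeasurable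
    (ae_of_all _ fun x => by
      simpa [abs_pow] using pow_le_one₀ (abs_nonneg _) (abs_re_fourier_le_one n x))

theorem re_fourierCoeff_ofReal {f : AddCircle T → ℝ} (hf : Integrable f haarAddCircle) (n : ℤ) :
    (fourierCoeff (fun x => (f x : ℂ)) n).re =
      ∫ x, (fourier (-n) x).re * f x ∂haarAddCircle := by
  rw [fourierCoeff, ← RCLike.re_to_complex, ← integral_re (hf.ofReal.fourier_smul _)]
  simp

theorem re_fourierCoeff_ofReal_two_mul {f : AddCircle T → ℝ} (hf : Integrable f haarAddCircle)
    (n : ℤ) : (fourierCoeff (fun x => (f x : ℂ)) (2 * n)).re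
      = 2 * ∫ x, (fourier (-n) x).re ^ 2 * f x ∂haarAddCircle - ∫ x, f x ∂haarAddCircle := by
  simp_rw [re_fourierCoeff_ofReal hf, ← mul_neg, re_fourier_two_mul, sub_mul, one_mul, mul_assoc]
  rw [integral_sub ((hf.re_fourier_pow_mul _ 2).const_mul 2) hf, integral_const_mul]

end Fourier

theorem re_fourier_neg_one_nonneg {x : UnitAddCircle} (hx : x ∈ QuarterArc) :
    0 ≤ (fourier (-1) x).re := by
  obtain ⟨y, ⟨hy₀, hy₁⟩, rfl⟩ := hx
  rw [re_fourier_coe]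
  apply cos_nonneg_of_mem_Icc
  constructor <;> push_cast <;> nlinarith [pi_pos]

theorem fourierCoeff_one_two_domain (f : UnitAddCircle → ℝ) (hf : IsPdfQuarter f) :
    2 * (fourierCoeff (fun x => (f x : ℂ)) 1).re ^ 2 - 1 ≤
      (fourierCoeff (fun x => (f x : ℂ)) 2).re ∧
    (fourierCoeff (fun x => (f x : ℂ)) 2).re ≤
      2 * (fourierCoeff (fun x => (f x : ℂ)) 1).re - 1 := by
  have hL2 : MemLp f 2 haarAddCircle := hf.memL2
  have hfi : Integrable f haarAddCircle := hL2.integrable one_le_two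
  have hf₁ : ∫ x, f x ∂haarAddCircle = 1 := hf.integral_one
  have hcf : Integrable (fun x => (fourier (-1) x).re * f x) haarAddCircle := by
    simpa using hfi.re_fourier_pow_mul (-1) 1
  have hc2f := hfi.re_fourier_pow_mul (-1) 2
  have hc : ∀ᵐ x ∂haarAddCircle, f x ≠ 0 → (fourier (-1) x).re ∈ Set.Icc 0 1 := by
    filter_upwards [hf.support] with x hx hfx
    exact ⟨re_fourier_neg_one_nonneg (not_imp_comm.mp hx hfx),
      (le_abs_self _).trans (abs_re_fourier_le_one _ _)⟩
  have hlower := sq_integral_mul_le_integral_sq_mul (ae_of_all _ hf.nonneg) hfi hf₁ hcf hc2f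
  have hupper := integral_sq_mul_le_integral_mul (ae_of_all _ hf.nonneg) hc hcf hc2f
  have h2 := re_fourierCoeff_ofReal_two_mul hfi 1
  rw [mul_one, hf₁] at h2
  rw [re_fourierCoeff_ofReal hfi 1, h2]
  constructor <;> linarith
end

section
/- For any integers n ≥ g ≥ 1, one has Δ(R(g,n)/n) ≤ g/n. -/
open MeasureTheory

/-- A finite set `S` of integers is a `B*[g]` set if every integer `m` has at most `g`
representations as an ordered sum `s₁ + s₂` with `s₁, s₂ ∈ S`. -/
def IsBstar (g : ℕ) (S : Finset ℤ) : Prop :=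
  ∀ m : ℤ, ((S ×ˢ S).filter (fun p => p.1 + p.2 = m)).card ≤ g

/-- `R g n` is the maximal size of a `B*[g]` set contained in `{1, …, n}`. -/
noncomputable def R (g n : ℕ) : ℕ :=
  sSup {k : ℕ | ∃ S : Finset ℤ, S ⊆ Finset.Icc 1 (n : ℤ) ∧ IsBstar g S ∧ S.card = k}

/-! Take a `B*[g]` set `S ⊆ {1, …, n}` with `R(g,n)` elements and let `A` be the union of the
cells `I_s = [(s - 1)/n, s/n)`, `s ∈ S`, so that `λ(A) = R(g,n)/n`. A subset of `A` symmetric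
about `c` lies in `A ∩ (2c - A)`, the union of the pieces `I_s ∩ (2c - I_t)` over `(s, t) ∈ S²`.
Translated by `t/n`, such a piece becomes `I_{s+t} ∩ (2c - I_0)`, so its measure depends only on
`m = s + t`. Each `m` arises from at most `g` pairs, and the sets `I_m ∩ (2c - I_0)` are disjoint
subsets of `2c - I_0`, so the total measure is at most `g λ(I_0) = g/n`. -/

def cell (δ : ℝ) (s : ℤ) : Set ℝ := Set.Ico ((s - 1) * δ) (s * δ)

def cellUnion (δ : ℝ) (S : Finset ℤ) : Set ℝ := ⋃ s ∈ S, cell δ s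

section Cells

variable (δ : ℝ)

lemma measurableSet_cell (s : ℤ) : MeasurableSet (cell δ s) := measurableSet_Ico

lemma measurableSet_cellUnion (S : Finset ℤ) : MeasurableSet (cellUnion δ S) :=
  S.measurableSet_biUnion fun s _ => measurableSet_cell δ s

lemma volume_cell (s : ℤ) : volume (cell δ s) = ENNReal.ofReal δ := by
  rw [cell, Real.volume_Ico]; ring_nf

open Function in
lemma pairwise_disjoint_cell : Pairwise (Disjoint on cell δ) := by
  refine (pairwise_disjoint_on _).2 fun s t hst => Set.disjoint_left.2 fun x hs ht => ?_
  have hst : (s : ℝ) + 1 ≤ t := by exact_mod_cast hst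
  simp only [cell, Set.mem_Ico] at hs ht
  nlinarith

lemma volume_cellUnion (S : Finset ℤ) :
    volume (cellUnion δ S) = S.card * ENNReal.ofReal δ := by
  rw [cellUnion, measure_biUnion_finset (fun s _ t _ h => pairwise_disjoint_cell δ h)
    fun s _ => measurableSet_cell δ s]
  simp [volume_cell]

lemma cellUnion_subset_Ico {δ : ℝ} (hδ : 0 ≤ δ) {S : Finset ℤ} {n : ℕ}
    (hS : S ⊆ Finset.Icc 1 (n : ℤ)) : cellUnion δ S ⊆ Set.Ico 0 (n * δ) := by
  simp only [cellUnion, Set.iUnion_subset_iff]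
  intro s hs x ⟨hx₁, hx₂⟩
  obtain ⟨hs₁, hsn⟩ := Finset.mem_Icc.1 (hS hs)
  have hs₁ : (1 : ℝ) ≤ s := by exact_mod_cast hs₁
  have hsn : (s : ℝ) ≤ n := by exact_mod_cast hsn
  constructor <;> nlinarith

lemma cell_inter_reflect (c : ℝ) (s t : ℤ) :
    cell δ s ∩ (2 * c - ·) ⁻¹' cell δ t =
      (· + t * δ) ⁻¹' (cell δ (s + t) ∩ (2 * c - ·) ⁻¹' cell δ 0) := by
  ext x
  simp only [cell, Set.mem_inter_iff, Set.mem_preimage, Set.mem_Ico]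
  push_cast
  constructor <;> rintro ⟨⟨_, _⟩, _, _⟩ <;> refine ⟨⟨?_, ?_⟩, ?_, ?_⟩ <;> linarith

lemma sum_volume_cell_inter_le (T : Finset ℤ) (J : Set ℝ) :
    ∑ m ∈ T, volume (cell δ m ∩ J) ≤ volume J := by
  simpa [Measure.restrict_apply (measurableSet_cell δ _)] using
    sum_measure_le_measure_univ (μ := volume.restrict J) (s := T)
      (fun m _ => (measurableSet_cell δ m).nullMeasurableSet)
      fun s _ t _ h => (pairwise_disjoint_cell δ h).aedisjoint

lemma volume_cellUnion_inter_reflect_le {g : ℕ} {S : Finset ℤ} (hS : IsBstar g S) (c : ℝ) :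
    volume (cellUnion δ S ∩ (2 * c - ·) ⁻¹' cellUnion δ S) ≤ g * ENNReal.ofReal δ := by
  set J := (2 * c - ·) ⁻¹' cell δ 0
  have hJ : volume J = ENNReal.ofReal δ := by
    have : J = Set.Ioc (2 * c) (2 * c + δ) := by
      ext x; simp only [J, cell, Set.mem_preimage, Set.mem_Ico, Set.mem_Ioc]; push_cast
      constructor <;> rintro ⟨_, _⟩ <;> constructor <;> linarith
    rw [this, Real.volume_Ioc]; ring_nf
  have hcover : cellUnion δ S ∩ (2 * c - ·) ⁻¹' cellUnion δ S ⊆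
      ⋃ p ∈ S ×ˢ S, cell δ p.1 ∩ (2 * c - ·) ⁻¹' cell δ p.2 := by
    rintro x ⟨hx, hx'⟩
    obtain ⟨s, hs, hxs⟩ := Set.mem_iUnion₂.1 hx
    obtain ⟨t, ht, hxt⟩ := Set.mem_iUnion₂.1 hx'
    exact Set.mem_iUnion₂.2 ⟨(s, t), Finset.mem_product.2 ⟨hs, ht⟩, hxs, hxt⟩
  calc volume (cellUnion δ S ∩ (2 * c - ·) ⁻¹' cellUnion δ S)
      ≤ ∑ p ∈ S ×ˢ S, volume (cell δ p.1 ∩ (2 * c - ·) ⁻¹' cell δ p.2) :=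
        (measure_mono hcover).trans (measure_biUnion_finset_le _ _)
    _ = ∑ p ∈ S ×ˢ S, volume (cell δ (p.1 + p.2) ∩ J) := by
        refine Finset.sum_congr rfl fun p _ => ?_
        rw [cell_inter_reflect, measure_preimage_add_right]
    _ = ∑ m ∈ (S ×ˢ S).image (fun p => p.1 + p.2),
          ((S ×ˢ S).filter (fun p => p.1 + p.2 = m)).card • volume (cell δ m ∩ J) :=
        Finset.sum_comp (fun m => volume (cell δ m ∩ J)) (fun p : ℤ × ℤ => p.1 + p.2)
    _ ≤ ∑ m ∈ (S ×ˢ S).image (fun p => p.1 + p.2), g • volume (cell δ m ∩ J) :=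
        Finset.sum_le_sum fun m _ => nsmul_le_nsmul_left zero_le (hS m)
    _ ≤ g * volume J := by
        rw [← Finset.smul_sum, nsmul_eq_mul]
        gcongr
        exact sum_volume_cell_inter_le δ _ J
    _ = g * ENNReal.ofReal δ := by rw [hJ]

end Cells

lemma symD_nonneg (A : Set ℝ) : 0 ≤ symD A :=
  Real.sSup_nonneg fun _ ⟨_, _, _, _, h⟩ => h ▸ ENNReal.toReal_nonneg

lemma symD_le_of_forall_volume_inter_reflect_le {A : Set ℝ} {b : ℝ} (hb : 0 ≤ b)
    (h : ∀ c, volume (A ∩ (2 * c - ·) ⁻¹' A) ≤ ENNReal.ofReal b) : symD A ≤ b := by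
  refine Real.sSup_le ?_ hb
  rintro _ ⟨C, hCA, -, ⟨c, hc⟩, rfl⟩
  have hC : C ⊆ A ∩ (2 * c - ·) ⁻¹' A := fun x hx => ⟨hCA hx, hCA ((hc x).1 hx)⟩
  exact ENNReal.toReal_le_of_le_ofReal hb ((measure_mono hC).trans (h c))

lemma symD_cellUnion_le {δ : ℝ} (hδ : 0 ≤ δ) {g : ℕ} {S : Finset ℤ} (hS : IsBstar g S) :
    symD (cellUnion δ S) ≤ g * δ :=
  symD_le_of_forall_volume_inter_reflect_le (by positivity) fun c => by
    rw [ENNReal.ofReal_mul (Nat.cast_nonneg g), ENNReal.ofReal_natCast]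
    exact volume_cellUnion_inter_reflect_le δ hS c

lemma Delta_le_symD {A : Set ℝ} (hA : A ⊆ Set.Ico 0 1) (hAm : MeasurableSet A) {ε : ℝ}
    (hε : volume A = ENNReal.ofReal ε) : Delta ε ≤ symD A :=
  csInf_le ⟨0, by rintro _ ⟨B, -, -, -, rfl⟩; exact symD_nonneg B⟩ ⟨A, hA, hAm, hε, rfl⟩

lemma exists_isBstar_card_eq_R (g n : ℕ) :
    ∃ S : Finset ℤ, S ⊆ Finset.Icc 1 (n : ℤ) ∧ IsBstar g S ∧ S.card = R g n :=
  Nat.sSup_mem (s := {k | ∃ S : Finset ℤ, S ⊆ Finset.Icc 1 (n : ℤ) ∧ IsBstar g S ∧ S.card = k})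
    ⟨0, ∅, by simp, fun m => by simp, rfl⟩
    ⟨n, by rintro k ⟨S, hS, -, rfl⟩; simpa using Finset.card_le_card hS⟩

theorem delta_from_R_general (g n : ℕ) :
    Delta ((R g n : ℝ) / n) ≤ (g : ℝ) / n := by
  obtain ⟨S, hSn, hS, hcard⟩ := exists_isBstar_card_eq_R g n
  have hδ : (0 : ℝ) ≤ (n : ℝ)⁻¹ := by positivity
  have hA : cellUnion (n : ℝ)⁻¹ S ⊆ Set.Ico 0 1 :=
    (cellUnion_subset_Ico hδ hSn).trans (Set.Ico_subset_Ico_right mul_inv_le_one)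
  have hvol : volume (cellUnion (n : ℝ)⁻¹ S) = ENNReal.ofReal ((R g n : ℝ) / n) := by
    rw [volume_cellUnion, hcard, ← ENNReal.ofReal_natCast, ← ENNReal.ofReal_mul (by positivity),
      div_eq_mul_inv]
  calc Delta ((R g n : ℝ) / n) ≤ symD (cellUnion (n : ℝ)⁻¹ S) :=
        Delta_le_symD hA (measurableSet_cellUnion _ S) hvol
    _ ≤ g * (n : ℝ)⁻¹ := symD_cellUnion_le hδ hS
    _ = g / n := (div_eq_mul_inv _ _).symm

theorem delta_from_R (g n : ℕ) (hg : 1 ≤ g) (hgn : g ≤ n) :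
    Delta ((R g n : ℝ) / n) ≤ (g : ℝ) / n :=
  delta_from_R_general g n
end
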